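/- Let R be an orthogonal TRS and suppose t rewrites at a non-outermost position q via rule ℓ_1 → r_1, where the redex at q is strictly below a redex at position q' < q via rule ℓ' → r'. Then after contracting the redex at q, the resulting term still has a redex at position q' via the same rule ℓ' → r'. (Contracting an inner redex of an orthogonal TRS preserves all outer redexes.) -/

import Mathlib

/-- First-order terms over a signature `F` with natural-number variables. -/
inductive Trm (F : Type) : Type
  | var : ℕ → Trm F
  | app : F → List (Trm F) → Trm F

namespace Trm

variable {F : Type}

/-- Application of a substitution to a term. -/
def subst (σ : ℕ → Trm F) : Trm F → Trm F
  | var n => σ n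
  | app f ts => app f (ts.attach.map fun x => subst σ x.1)
decreasing_by have := List.sizeOf_lt_of_mem x.2; simp; omega

/-- The list of variables occurring in a term. -/
def varList : Trm F → List ℕ
  | var n => [n]
  | app _ ts => ts.attach.flatMap fun x => varList x.1
decreasing_by have := List.sizeOf_lt_of_mem x.2; simp; omega

/-- A term is ground if it contains no variables. -/
def Ground (t : Trm F) : Prop := varList t = []

/-- The subterm at a position (a list of argument indices), if it exists. -/
def subtermAt : Trm F → List ℕ → Option (Trm F)
  | t, [] => some t
  | var _, _ :: _ => none
  | app _ ts, i :: p => (ts[i]?).bind fun t => subtermAt t p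

/-- Replacement of the subterm at a position by another term, if the position exists. -/
def replaceAt : Trm F → List ℕ → Trm F → Option (Trm F)
  | _, [], s => some s
  | var _, _ :: _, _ => none
  | app f ts, i :: p, s =>
      (ts[i]?).bind fun t => (replaceAt t p s).map fun t' => app f (ts.set i t')

def IsVar : Trm F → Prop
  | var _ => True
  | app _ _ => False

end Trm

open Trm

variable {F : Type}

/-- A rewrite rule is a pair (lhs, rhs). -/
abbrev Rule (F : Type) := Trm F × Trm F

/-- A term is a redex w.r.t. a TRS `R` if it is an instance of a left-hand side. -/
def IsRedex (R : Set (Rule F)) (t : Trm F) : Prop :=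
  ∃ (l r : Trm F) (σ : ℕ → Trm F), (l, r) ∈ R ∧ t = subst σ l

/-- `t` has a redex at position `p`. -/
def HasRedexAt (R : Set (Rule F)) (t : Trm F) (p : List ℕ) : Prop :=
  ∃ s, subtermAt t p = some s ∧ IsRedex R s

/-- A rewrite step of `R` at position `p`. -/
def RewriteAt (R : Set (Rule F)) (t t' : Trm F) (p : List ℕ) : Prop :=
  ∃ (l r : Trm F) (σ : ℕ → Trm F), (l, r) ∈ R ∧
    subtermAt t p = some (subst σ l) ∧ replaceAt t p (subst σ r) = some t'

/-- A rewrite step of `R` (at some position). -/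
def Rewrite (R : Set (Rule F)) (t t' : Trm F) : Prop := ∃ p, RewriteAt R t t' p

/-- Many-step rewriting. -/
abbrev RewriteStar (R : Set (Rule F)) : Trm F → Trm F → Prop :=
  Relation.ReflTransGen (Rewrite R)

/-- `p` is a strict (proper) prefix of `q`, i.e. position `p` is strictly above `q`. -/
def StrictPref (p q : List ℕ) : Prop := p <+: q ∧ p ≠ q

/-- Two positions are independent (parallel) if neither is a prefix of the other. -/
def Indep (p q : List ℕ) : Prop := ¬ p <+: q ∧ ¬ q <+: p

/-- An outermost rewrite step at position `p`: no redex strictly above `p`. -/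
def OutStepAt (R : Set (Rule F)) (t t' : Trm F) (p : List ℕ) : Prop :=
  RewriteAt R t t' p ∧ ∀ q, StrictPref q p → ¬ HasRedexAt R t q

def OutStep (R : Set (Rule F)) (t t' : Trm F) : Prop := ∃ p, OutStepAt R t t' p

/-- A non-outermost rewrite step at position `p`: some redex strictly above `p`. -/
def NonOutStepAt (R : Set (Rule F)) (t t' : Trm F) (p : List ℕ) : Prop :=
  RewriteAt R t t' p ∧ ∃ q, StrictPref q p ∧ HasRedexAt R t q

def NonOutStep (R : Set (Rule F)) (t t' : Trm F) : Prop := ∃ p, NonOutStepAt R t t' p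

/-- A sequence of rewrite steps at the listed positions. -/
inductive StepsAt (R : Set (Rule F)) : Trm F → Trm F → List (List ℕ) → Prop
  | nil (t) : StepsAt R t t []
  | cons {t t' t'' p ps} : RewriteAt R t t' p → StepsAt R t' t'' ps →
      StepsAt R t t'' (p :: ps)

/-- A parallel rewrite step: contraction of redexes at pairwise independent positions. -/
def ParStep (R : Set (Rule F)) (t t' : Trm F) : Prop :=
  ∃ ps : List (List ℕ), ps.Pairwise Indep ∧ StepsAt R t t' ps

/-- A parallel step all of whose contracted positions are non-outermost in the source,
i.e. each contracted redex lies strictly below another redex. -/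
def ParNonOut (R : Set (Rule F)) (t t' : Trm F) : Prop :=
  ∃ ps : List (List ℕ), ps.Pairwise Indep ∧
    (∀ p ∈ ps, ∃ q, StrictPref q p ∧ HasRedexAt R t q) ∧ StepsAt R t t' ps

/-- Left-linearity: no variable occurs twice in a left-hand side. -/
def LeftLinear (R : Set (Rule F)) : Prop := ∀ l r, (l, r) ∈ R → (varList l).Nodup

/-- Non-overlapping: the only overlaps between left-hand sides are trivial root
overlaps of a rule with itself. -/
def NonOverlapping (R : Set (Rule F)) : Prop :=
  ∀ l₁ r₁ l₂ r₂, (l₁, r₁) ∈ R → (l₂, r₂) ∈ R →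
    ∀ p s, subtermAt l₁ p = some s → ¬ IsVar s →
      ∀ (σ τ : ℕ → Trm F), subst σ s = subst τ l₂ →
        p = [] ∧ l₁ = l₂ ∧ r₁ = r₂

/-- Orthogonality: left-linear and non-overlapping. -/
def Orthogonal (R : Set (Rule F)) : Prop := LeftLinear R ∧ NonOverlapping R

/-- A symbol `c` is a constructor of `R` if no left-hand side has root `c`. -/
def IsConstructor (R : Set (Rule F)) (c : F) : Prop :=
  ∀ l r, (l, r) ∈ R → ∀ ts, l ≠ app c ts

/-- An infinite outermost reduction (with its sequence of contracted positions). -/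
def InfOutRed (R : Set (Rule F)) (ts : ℕ → Trm F) (ps : ℕ → List ℕ) : Prop :=
  ∀ i, OutStepAt R (ts i) (ts (i + 1)) (ps i)

/-- Balancedness: every redex is eventually reduced or consumed by a step at or
above its position. -/
def BalancedRed (R : Set (Rule F)) (ts : ℕ → Trm F) (ps : ℕ → List ℕ) : Prop :=
  ∀ i q, HasRedexAt R (ts i) q → ∃ j, i ≤ j ∧ ps j <+: q

/-- BalancedRed outermost termination: no infinite balanced outermost reduction. -/
def BalOutTerminating (R : Set (Rule F)) : Prop :=
  ¬ ∃ (ts : ℕ → Trm F) (ps : ℕ → List ℕ), InfOutRed R ts ps ∧ BalancedRed R ts ps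

/-- Outermost termination: no infinite outermost reduction. -/
def OutTerminating (R : Set (Rule F)) : Prop :=
  ¬ ∃ (ts : ℕ → Trm F) (ps : ℕ → List ℕ), InfOutRed R ts ps

/-- A term with the stream constructor ':' (here `c`) at the root. -/
def ConsRooted (c : F) (t : Trm F) : Prop := ∃ u t', t = app c [u, t']

/-- `ConsTower c n t` says `t = u₁ : u₂ : ⋯ : uₙ : t'`. -/
def ConsTower (c : F) : ℕ → Trm F → Prop
  | 0, _ => True
  | n + 1, t => ∃ u t', t = app c [u, t'] ∧ ConsTower c n t'

/-- Productivity of a term: it produces arbitrarily many ':'-elements. -/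
def Productive (R : Set (Rule F)) (c : F) (t : Trm F) : Prop :=
  ∀ n, ∃ t', RewriteStar R t t' ∧ ConsTower c n t'

/-- Well-sortedness of terms, with sorts `Bool` (`false` = data, `true` = stream),
argument/result sorts given by `ar` and variable sorts by `vs`. -/
inductive WS (ar : F → List Bool × Bool) (vs : ℕ → Bool) : Trm F → Bool → Prop
  | var (n) : WS ar vs (var n) (vs n)
  | app (f) (ts : List (Trm F)) : ts.length = (ar f).1.length →
      (∀ (i : ℕ) t b, ts[i]? = some t → (ar f).1[i]? = some b → WS ar vs t b) →
      WS ar vs (app f ts) (ar f).2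

/-- All function symbols of a term belong to the set `S`. -/
inductive SymOver (S : Set F) : Trm F → Prop
  | var (n) : SymOver S (var n)
  | app (f) (ts : List (Trm F)) : f ∈ S → (∀ t ∈ ts, SymOver S t) → SymOver S (app f ts)

/-- A stream specification `(Σ_d, Σ_s, R_d, R_s)` over signature `F`. -/
structure StreamSpec (F : Type) where
  /-- argument sorts and result sort of each symbol -/
  ar : F → List Bool × Bool
  /-- sorts of variables -/
  vs : ℕ → Bool
  /-- the stream constructor ':' of type d × s → s -/
  cons : F
  cons_ar : ar cons = ([false, true], true)
  /-- the data signature Σ_d -/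
  Sd : Set F
  /-- the stream signature Σ_s -/
  Ss : Set F
  cons_not_d : cons ∉ Sd
  cons_not_s : cons ∉ Ss
  d_sorts : ∀ f ∈ Sd, (∀ b ∈ (ar f).1, b = false) ∧ (ar f).2 = false
  s_res : ∀ f ∈ Ss, (ar f).2 = true
  /-- the data rules -/
  Rd : Set (Rule F)
  /-- the stream rules -/
  Rs : Set (Rule F)
  Rd_data : ∀ rl ∈ Rd, SymOver Sd rl.1 ∧ SymOver Sd rl.2
  Rd_sorted : ∀ l r, (l, r) ∈ Rd → WS ar vs l false ∧ WS ar vs r false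
  /-- R_d is terminating -/
  Rd_term : WellFounded (fun a b : Trm F => Rewrite Rd b a)
  /-- R_d ∪ R_s is orthogonal -/
  orth : Orthogonal (Rd ∪ Rs)
  Rs_sorted : ∀ l r, (l, r) ∈ Rs → WS ar vs l true ∧ WS ar vs r true
  /-- left-hand sides of R_s have the shape f(u₁,…,uₙ,t₁,…,tₘ) with f ∈ Σ_s and
  each stream argument tᵢ a variable or of the form x : σ -/
  lhs_shape : ∀ l r, (l, r) ∈ Rs → ∃ f args, f ∈ Ss ∧ l = app f args ∧
    ∀ (i : ℕ) a, args[i]? = some a → (ar f).1[i]? = some true →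
      (∃ n, a = var n) ∨ (∃ n m, a = app cons [var n, var m])
  /-- exhaustiveness: every ground term f(u₁,…,uₙ,u_{n+1}:t₁,…) with the uᵢ data
  normal forms is a redex of R_s -/
  exhaustive : ∀ f ts, f ∈ Ss → Ground (app f ts) →
    SymOver (Sd ∪ Ss ∪ {cons}) (app f ts) → WS ar vs (app f ts) true →
    (∀ (i : ℕ) t, ts[i]? = some t →
      ((ar f).1[i]? = some false → ∀ t', ¬ Rewrite Rd t t') ∧
      ((ar f).1[i]? = some true → ∃ u t', t = app cons [u, t'])) →
    IsRedex Rs (app f ts)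

/-- A ground term of sort s over the signature of the specification. -/
def StreamSpec.GroundStream (S : StreamSpec F) (t : Trm F) : Prop :=
  Ground t ∧ SymOver (S.Sd ∪ S.Ss ∪ {S.cons}) t ∧ WS S.ar S.vs t true

/-- Productivity of the specification on all ground terms of sort s. -/
def StreamSpec.ProductiveAll (S : StreamSpec F) : Prop :=
  ∀ t, S.GroundStream t → Productive (S.Rd ∪ S.Rs) S.cons t

/-- The additional rule `x : σ → overflow`. -/
def ovRule (c ov : F) : Rule F := (app c [var 0, var 1], app ov [])

/-! A redex strictly below the outer redex `ς ℓ'` cannot sit at a non-variable position of `ℓ'`: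
that would be an overlap of `ℓ₁` with `ℓ'` below the root. So it lies inside `ς x` for a variable
`x` of `ℓ'`, and since `ℓ'` is linear, `x` occurs only there: contracting the inner redex merely
replaces `ς x` by its reduct, and the result at `q'` is again an instance of `ℓ'`. -/

namespace Trm

@[simp] theorem subst_var (σ : ℕ → Trm F) (n : ℕ) : subst σ (var n) = σ n := by
  rw [subst]

@[simp] theorem subst_app (σ : ℕ → Trm F) (f : F) (ts : List (Trm F)) :
    subst σ (app f ts) = app f (ts.map (subst σ)) := by
  rw [subst]
  simp

theorem varList_app (f : F) (ts : List (Trm F)) : varList (app f ts) = ts.flatMap varList := by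
  rw [varList]
  simp

@[simp] theorem subtermAt_nil (t : Trm F) : subtermAt t [] = some t := by
  rw [subtermAt]

@[simp] theorem subtermAt_var_cons (n i : ℕ) (p : List ℕ) :
    subtermAt (var n : Trm F) (i :: p) = none := by
  rw [subtermAt]

@[simp] theorem subtermAt_app_cons (f : F) (ts : List (Trm F)) (i : ℕ) (p : List ℕ) :
    subtermAt (app f ts) (i :: p) = ts[i]?.bind (subtermAt · p) := by
  rw [subtermAt]

@[simp] theorem replaceAt_nil (t s : Trm F) : replaceAt t [] s = some s := by
  rw [replaceAt]

@[simp] theorem replaceAt_app_cons (f : F) (ts : List (Trm F)) (i : ℕ) (p : List ℕ) (s : Trm F) :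
    replaceAt (app f ts) (i :: p) s =
      ts[i]?.bind fun t => (replaceAt t p s).map fun t' => app f (ts.set i t') := by
  rw [replaceAt]

theorem subtermAt_append (t : Trm F) (p q : List ℕ) :
    subtermAt t (p ++ q) = (subtermAt t p).bind (subtermAt · q) := by
  induction p generalizing t with
  | nil => simp
  | cons i p ih =>
    cases t with
    | var _ => simp
    | app f ts => simp [ih, Option.bind_assoc]

theorem exists_replaceAt_of_subtermAt {t u : Trm F} {p : List ℕ} (s : Trm F)
    (h : subtermAt t p = some u) : ∃ t', replaceAt t p s = some t' := by
  induction p generalizing t with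
  | nil => simp
  | cons i p ih =>
    cases t with
    | var _ => simp at h
    | app f ts =>
      obtain ⟨v, hv, hvu⟩ := Option.bind_eq_some_iff.mp (by simpa using h)
      obtain ⟨v', hv'⟩ := ih hvu
      exact ⟨app f (ts.set i v'), by simp [hv, hv']⟩

theorem subtermAt_replaceAt_append {t t' u s : Trm F} {q p : List ℕ}
    (hr : replaceAt t (q ++ p) s = some t') (hu : subtermAt t q = some u) :
    ∃ u', replaceAt u p s = some u' ∧ subtermAt t' q = some u' := by
  induction q generalizing t t' with
  | nil => simp_all
  | cons i q ih =>
    cases t with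
    | var _ => simp at hu
    | app f ts =>
      obtain ⟨v, hv, hvu⟩ := Option.bind_eq_some_iff.mp (by simpa using hu)
      obtain ⟨w, hw, rfl⟩ : ∃ w, replaceAt v (q ++ p) s = some w ∧ app f (ts.set i w) = t' := by
        simpa [hv] using hr
      obtain ⟨u', hu', hwu⟩ := ih hw hvu
      have hi : i < ts.length := (List.getElem?_eq_some_iff.mp hv).1
      exact ⟨u', hu', by simp [hi, hwu]⟩

theorem mem_varList_of_subtermAt_eq_var {u : Trm F} {p : List ℕ} {n : ℕ}
    (h : subtermAt u p = some (var n)) : n ∈ varList u := by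
  induction p generalizing u with
  | nil => simp_all [varList]
  | cons i p ih =>
    cases u with
    | var _ => simp at h
    | app f ts =>
      obtain ⟨v, hv, hvn⟩ := Option.bind_eq_some_iff.mp (by simpa using h)
      rw [varList_app, List.mem_flatMap]
      exact ⟨v, List.mem_of_getElem? hv, ih hvn⟩

theorem subtermAt_subst {l s : Trm F} {p : List ℕ} (ς : ℕ → Trm F)
    (h : subtermAt l p = some s) : subtermAt (subst ς l) p = some (subst ς s) := by
  induction p generalizing l with
  | nil => simp_all
  | cons i p ih =>
    cases l with
    | var _ => simp at h
    | app f ts =>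
      obtain ⟨v, hv, hvs⟩ := Option.bind_eq_some_iff.mp (by simpa using h)
      simp [hv, ih hvs]

theorem subst_congr {σ σ' : ℕ → Trm F} :
    ∀ u : Trm F, (∀ m ∈ varList u, σ m = σ' m) → subst σ u = subst σ' u
  | var n, h => by simpa [varList] using h
  | app f ts, h => by
    rw [subst_app, subst_app]
    congr 1
    refine List.map_congr_left fun u hu => subst_congr u fun m hm => h m ?_
    rw [varList_app, List.mem_flatMap]
    exact ⟨u, hu, hm⟩
decreasing_by have := List.sizeOf_lt_of_mem hu; simp; omega

theorem subst_update_of_not_mem {u : Trm F} {n : ℕ} (σ : ℕ → Trm F) (w : Trm F)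
    (h : n ∉ varList u) : subst (Function.update σ n w) u = subst σ u :=
  subst_congr u fun _ hm => Function.update_of_ne (ne_of_mem_of_not_mem hm h) _ _

theorem subtermAt_subst_cases {l u : Trm F} {p : List ℕ} (ς : ℕ → Trm F)
    (h : subtermAt (subst ς l) p = some u) :
    (∃ s, subtermAt l p = some s ∧ ¬ IsVar s) ∨
      ∃ p₁ p₂ n, p = p₁ ++ p₂ ∧ subtermAt l p₁ = some (var n) ∧ subtermAt (ς n) p₂ = some u := by
  induction p generalizing l with
  | nil =>
    cases l with
    | var n => exact Or.inr ⟨[], [], n, rfl, by simp, by simpa using h⟩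
    | app f ts => exact Or.inl ⟨app f ts, by simp, not_false⟩
  | cons i p ih =>
    cases l with
    | var n => exact Or.inr ⟨[], i :: p, n, rfl, by simp, by simpa using h⟩
    | app f ts =>
      obtain ⟨v, hv, hvu⟩ : ∃ v, ts[i]? = some v ∧ subtermAt (subst ς v) p = some u := by
        simpa [Option.bind_eq_some_iff] using h
      rcases ih hvu with ⟨s, hs, hsv⟩ | ⟨p₁, p₂, n, rfl, hn, hnu⟩
      · exact Or.inl ⟨s, by simp [hv, hs], hsv⟩
      · exact Or.inr ⟨i :: p₁, p₂, n, rfl, by simp [hv, hn], hnu⟩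

theorem disjoint_varList_getElem_of_nodup {f : F} {ts : List (Trm F)}
    (h : (varList (app f ts)).Nodup) {i j : ℕ} (hi : i < ts.length) (hj : j < ts.length) (hij : i ≠ j) :
    (varList ts[i]).Disjoint (varList ts[j]) := by
  rw [varList_app, List.nodup_flatMap, List.pairwise_iff_getElem] at h
  rcases lt_or_gt_of_ne hij with hlt | hgt
  · exact h.2 i j hi hj hlt
  · exact (h.2 j i hj hi hgt).symm

theorem set_map_subst_eq {σ σ' : ℕ → Trm F} {ts : List (Trm F)} {i : ℕ} (hi : i < ts.length)
    (h : ∀ j (hj : j < ts.length), j ≠ i → subst σ ts[j] = subst σ' ts[j]) :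
    (ts.map (subst σ)).set i (subst σ' ts[i]) = ts.map (subst σ') := by
  refine List.ext_getElem (by simp) fun j hj _ => ?_
  rcases eq_or_ne j i with rfl | hji
  · simp
  · simp [hji.symm, h j (by simpa using hj) hji]

theorem replaceAt_subst_of_nodup {l s w : Trm F} {p₁ p₂ : List ℕ} {n : ℕ} {ς : ℕ → Trm F}
    (hl : (varList l).Nodup) (hn : subtermAt l p₁ = some (var n))
    (hw : replaceAt (ς n) p₂ s = some w) :
    replaceAt (subst ς l) (p₁ ++ p₂) s = some (subst (Function.update ς n w) l) := by
  induction p₁ generalizing l with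
  | nil =>
    obtain rfl : l = var n := by simpa using hn
    simpa using hw
  | cons i p₁ ih =>
    cases l with
    | var _ => simp at hn
    | app f ts =>
      obtain ⟨hi, hin⟩ : ∃ hi : i < ts.length, subtermAt ts[i] p₁ = some (var n) := by
        simpa [Option.bind_eq_some_iff, List.getElem?_eq_some_iff] using hn
      have hli : (varList ts[i]).Nodup :=
        (List.nodup_flatMap.mp (varList_app f ts ▸ hl)).1 _ (List.getElem_mem hi)
      have hothers : ∀ j (hj : j < ts.length), j ≠ i →
          subst ς ts[j] = subst (Function.update ς n w) ts[j] := fun j hj hji =>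
        (subst_update_of_not_mem ς w fun hnj =>
          disjoint_varList_getElem_of_nodup hl hi hj hji.symm
            (mem_varList_of_subtermAt_eq_var hin) hnj).symm
      simp [hi, ih hli hin, set_map_subst_eq hi hothers]

end Trm

theorem NonOverlapping.exists_var_prefix_of_subtermAt_subst {R : Set (Rule F)}
    (hR : NonOverlapping R) {l' r' l₁ r₁ : Trm F} (h' : (l', r') ∈ R) (h₁ : (l₁, r₁) ∈ R)
    {ς σ₁ : ℕ → Trm F} {p : List ℕ} (hp : p ≠ [])
    (h : subtermAt (subst ς l') p = some (subst σ₁ l₁)) :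
    ∃ p₁ p₂ n, p = p₁ ++ p₂ ∧ subtermAt l' p₁ = some (var n) ∧
      subtermAt (ς n) p₂ = some (subst σ₁ l₁) := by
  refine (subtermAt_subst_cases ς h).resolve_left ?_
  rintro ⟨s, hs, hsv⟩
  have hoverlap : subst ς s = subst σ₁ l₁ :=
    Option.some_injective _ ((subtermAt_subst ς hs).symm.trans h)
  exact hp (hR l' r' l₁ r₁ h' h₁ p s hs hsv ς σ₁ hoverlap).1

/-- contracting an inner redex of an orthogonal TRS preserves all
outer redexes (with the same rule). -/
theorem inner_step_preserves_outer_redex {F : Type} (R : Set (Rule F))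
    (ho : Orthogonal R)
    (l' r' l₁ r₁ : Trm F) (h' : (l', r') ∈ R) (h₁ : (l₁, r₁) ∈ R)
    (t t₂ : Trm F) (q' q : List ℕ) (ς σ₁ : ℕ → Trm F)
    (houter : subtermAt t q' = some (subst ς l'))
    (hbelow : StrictPref q' q)
    (hinner : subtermAt t q = some (subst σ₁ l₁))
    (hrepl : replaceAt t q (subst σ₁ r₁) = some t₂) :
    ∃ τ, subtermAt t₂ q' = some (subst τ l') := by
  obtain ⟨⟨p, rfl⟩, hne⟩ := hbelow
  have hp : p ≠ [] := by rintro rfl; simp at hne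
  have hsub : subtermAt (subst ς l') p = some (subst σ₁ l₁) := by
    simpa [subtermAt_append, houter] using hinner
  obtain ⟨p₁, p₂, n, rfl, hn, hredex⟩ := ho.2.exists_var_prefix_of_subtermAt_subst h' h₁ hp hsub
  obtain ⟨w, hw⟩ := exists_replaceAt_of_subtermAt (subst σ₁ r₁) hredex
  obtain ⟨u, hu, ht₂⟩ := subtermAt_replaceAt_append hrepl houter
  rw [replaceAt_subst_of_nodup (ho.1 l' r' h') hn hw, Option.some_inj] at hu
  exact ⟨_, hu ▸ ht₂⟩
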